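/- Let V ∈ ℝ[x₁,…,x_n], ρ > 0, κ_V > 0. Suppose there exist polynomials λ₀, λ₁, …, λₘ, each SOS, such that (1+λ₀(x))·(V(x)−ρ)·(xᵀx) − Σ_{i=1}^m λᵢ(x)·(V̇(x,uⁱ)+κ_V V(x)) is SOS. Then for every x ∈ ℝⁿ with V(x) < ρ and x ≠ 0, there exists u ∈ 𝒰 such that V̇(x,u) < −κ_V V(x). -/

import Mathlib

open MvPolynomial Finset

/-- A polynomial is a sum of squares. -/
def IsSOS {n : ℕ} (p : MvPolynomial (Fin n) ℝ) : Prop :=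
  ∃ (N : ℕ) (q : Fin N → MvPolynomial (Fin n) ℝ), p = ∑ i, (q i) ^ 2

/-- `V̇(x,u) = ∇V(x)ᵀ(f(x) + g(x)u)` as a polynomial in `x`, for a fixed input vector `u`. -/
noncomputable def VdotPoly {n nu : ℕ} (V : MvPolynomial (Fin n) ℝ)
    (f : Fin n → MvPolynomial (Fin n) ℝ) (g : Fin n → Fin nu → MvPolynomial (Fin n) ℝ)
    (u : Fin nu → ℝ) : MvPolynomial (Fin n) ℝ :=
  ∑ i, pderiv i V * (f i + ∑ j, C (u j) * g i j)

/-- `V̇(x,u)` evaluated at the state `x`. -/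
noncomputable def VdotFun {n nu : ℕ} (V : MvPolynomial (Fin n) ℝ)
    (f : Fin n → MvPolynomial (Fin n) ℝ) (g : Fin n → Fin nu → MvPolynomial (Fin n) ℝ)
    (x : Fin n → ℝ) (u : Fin nu → ℝ) : ℝ :=
  eval x (VdotPoly V f g u)

/-! Evaluate the certificate at a state `x` with `V(x) < ρ`, `x ≠ 0`: the first term
`(1 + λ₀)(V - ρ)‖x‖²` is negative, so the nonnegative certificate forces
`∑ λᵢ (V̇(x,uⁱ) + κ_V V(x)) < 0`. As every `λᵢ(x) ≥ 0`, some vertex `uⁱ ∈ 𝒰` has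
`V̇(x,uⁱ) + κ_V V(x) < 0`. -/

lemma IsSOS.eval_nonneg {n : ℕ} {p : MvPolynomial (Fin n) ℝ} (h : IsSOS p)
    (x : Fin n → ℝ) : 0 ≤ eval x p := by
  obtain ⟨N, q, rfl⟩ := h
  simp only [map_sum, map_pow]
  exact sum_nonneg fun i _ => sq_nonneg _

section OrderedRing

variable {R ι : Type*} [Ring R] [LinearOrder R] [IsStrictOrderedRing R]

lemma sum_sq_pos_of_ne_zero [Fintype ι] {x : ι → R} (hx : x ≠ 0) : 0 < ∑ i, x i ^ 2 := by
  obtain ⟨i, hi⟩ := Function.ne_iff.mp hx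
  exact sum_pos' (fun j _ => sq_nonneg _) ⟨i, mem_univ i, sq_pos_of_ne_zero hi⟩

lemma Finset.exists_neg_of_sum_mul_neg {s : Finset ι} {a b : ι → R}
    (ha : ∀ i ∈ s, 0 ≤ a i) (h : ∑ i ∈ s, a i * b i < 0) : ∃ i ∈ s, b i < 0 := by
  obtain ⟨i, hi, hneg⟩ :=
    exists_lt_of_sum_lt (f := fun i => a i * b i) (g := fun _ => 0) (by rwa [sum_const_zero])
  exact ⟨i, hi, neg_of_mul_neg_right hneg (ha i hi)⟩

lemma exists_neg_of_s_procedure [Fintype ι] {l₀ v ρ s : R} {l d : ι → R}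
    (hl₀ : 0 ≤ l₀) (hl : ∀ i, 0 ≤ l i) (hv : v < ρ) (hs : 0 < s)
    (hcert : 0 ≤ (1 + l₀) * ((v - ρ) * s) - ∑ i, l i * d i) : ∃ i, d i < 0 := by
  have hfirst : (1 + l₀) * ((v - ρ) * s) < 0 :=
    mul_neg_of_pos_of_neg (add_pos_of_pos_of_nonneg one_pos hl₀)
      (mul_neg_of_neg_of_pos (sub_neg.mpr hv) hs)
  obtain ⟨i, -, hi⟩ :=
    exists_neg_of_sum_mul_neg (fun i _ => hl i) ((sub_nonneg.mp hcert).trans_lt hfirst)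
  exact ⟨i, hi⟩

end OrderedRing

theorem clf_s_procedure_sufficient_general {n nu m : ℕ}
    (V : MvPolynomial (Fin n) ℝ)
    (f : Fin n → MvPolynomial (Fin n) ℝ) (g : Fin n → Fin nu → MvPolynomial (Fin n) ℝ)
    (uvert : Fin m → Fin nu → ℝ)
    (ρ κV : ℝ)
    (lam0 : MvPolynomial (Fin n) ℝ) (lam : Fin m → MvPolynomial (Fin n) ℝ)
    (hlam0 : IsSOS lam0) (hlam : ∀ i, IsSOS (lam i))
    (hmain : IsSOS ((1 + lam0) * ((V - C ρ) * ∑ i, (X i : MvPolynomial (Fin n) ℝ) ^ 2)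
        - ∑ i, lam i * (VdotPoly V f g (uvert i) + C κV * V))) :
    ∀ x : Fin n → ℝ, eval x V < ρ → x ≠ 0 →
      ∃ u ∈ convexHull ℝ (Set.range uvert), VdotFun V f g x u < -κV * eval x V := by
  intro x hV hx
  have hcert := hmain.eval_nonneg x
  simp only [map_sub, map_mul, map_add, map_sum, map_pow, map_one, eval_C, eval_X] at hcert
  obtain ⟨i, hi⟩ := exists_neg_of_s_procedure (hlam0.eval_nonneg x)
    (fun i => (hlam i).eval_nonneg x) hV (sum_sq_pos_of_ne_zero hx) hcert
  exact ⟨uvert i, subset_convexHull ℝ _ ⟨i, rfl⟩, by rw [VdotFun]; linarith⟩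

theorem clf_s_procedure_sufficient {n nu m : ℕ}
    (V : MvPolynomial (Fin n) ℝ)
    (f : Fin n → MvPolynomial (Fin n) ℝ) (g : Fin n → Fin nu → MvPolynomial (Fin n) ℝ)
    (uvert : Fin m → Fin nu → ℝ)
    (ρ κV : ℝ) (hρ : 0 < ρ) (hκ : 0 < κV)
    (lam0 : MvPolynomial (Fin n) ℝ) (lam : Fin m → MvPolynomial (Fin n) ℝ)
    (hlam0 : IsSOS lam0) (hlam : ∀ i, IsSOS (lam i))
    (hmain : IsSOS ((1 + lam0) * ((V - C ρ) * ∑ i, (X i : MvPolynomial (Fin n) ℝ) ^ 2)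
        - ∑ i, lam i * (VdotPoly V f g (uvert i) + C κV * V))) :
    ∀ x : Fin n → ℝ, eval x V < ρ → x ≠ 0 →
      ∃ u ∈ convexHull ℝ (Set.range uvert), VdotFun V f g x u < -κV * eval x V :=
  clf_s_procedure_sufficient_general V f g uvert ρ κV lam0 lam hlam0 hlam hmain
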